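/- Let (V,d,b) be an acyclic information network, let C, Ĉ ⊆ V\{d} be disjoint, let w ∈ (V\{d}) \ (C ∪ Ĉ), let v be a non-void node and 1 ≤ t ≤ T. Then E[X^t_v(C ∪ {w}, Ĉ)] − E[X^t_v(C, Ĉ)] = (M_Ĉ^t) v w; in particular this marginal gain does not depend on C. -/
import Mathlib


open MeasureTheory

/-- An information network: a finite node set `V` with a distinguished void node `d`
and a row-stochastic weight matrix `b` with entries in `[0,1]` and `b d d = 1`. -/
structure InfoNetwork (V : Type*) [Fintype V] where
  d : V
  b : V → V → ℝ
  b_nonneg : ∀ v u, 0 ≤ b v u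
  b_le_one : ∀ v u, b v u ≤ 1
  row_sum : ∀ v, ∑ u, b v u = 1
  void_loop : b d d = 1

/-- The uniform probability measure on the interval `(0,1)`. -/
noncomputable def unifMeasure : Measure ℝ := volume.restrict (Set.Ioo (0:ℝ) 1)

/-- Product over `V` of uniform measures on `(0,1)`: the distribution of the thresholds. -/
noncomputable def thresholdMeasure (V : Type*) [Fintype V] : Measure (V → ℝ) :=
  Measure.pi fun _ : V => unifMeasure

namespace InfoNetwork

variable {V : Type*} [Fintype V]

/-- The set of active nodes at time `t` under the non-progressive linear threshold model,
with transient initial set `A`, permanent initial set `Ahat` and thresholds `θ`. -/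
noncomputable def activeSet (N : InfoNetwork V) (A Ahat : Set V) (θ : V → ℝ) : ℕ → Set V
  | 0 => A ∪ Ahat
  | t+1 => Ahat ∪
      {v | v ∉ Ahat ∧ θ v ≤ ∑ u, (N.activeSet A Ahat θ t).indicator (N.b v) u}

/-- `E[X^t_v(A,Ahat)]`: the probability (over the random thresholds) that `v` is active
at time `t`. -/
noncomputable def EX (N : InfoNetwork V) (A Ahat : Set V) (t : ℕ) (v : V) : ℝ :=
  (thresholdMeasure V {θ | v ∈ N.activeSet A Ahat θ t}).toReal

/-- The expected influence over the period `[1,T]`. -/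
noncomputable def sigmaBar (N : InfoNetwork V) (T : ℕ) (A Ahat : Set V) : ℝ :=
  (1 / (T : ℝ)) * ∑ t ∈ Finset.Icc 1 T, ∑ v, N.EX A Ahat t v

/-- The edge relation of the directed graph on `V \ {d}`. -/
def edgeRel (N : InfoNetwork V) (v u : V) : Prop :=
  v ≠ N.d ∧ u ≠ N.d ∧ 0 < N.b v u

/-- The network is acyclic if the directed graph on `V \ {d}` has no directed cycle. -/
def Acyclic (N : InfoNetwork V) : Prop :=
  ∀ v, ¬ Relation.TransGen N.edgeRel v v

end InfoNetwork

/-- A real-valued set function `f` is submodular on the ground set `S`. -/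
def SubmodularOn {V : Type*} (S : Set V) (f : Set V → ℝ) : Prop :=
  ∀ A B : Set V, A ⊆ B → B ⊆ S → ∀ w ∈ S, w ∉ B →
    f (insert w B) - f B ≤ f (insert w A) - f A

open scoped Classical in
/-- The absorbing modification `M_Â` of `b`: row `v` equals row `v` of `b` when `v ∉ Ahat`
and equals the standard basis row `e_v` when `v ∈ Ahat`. -/
noncomputable def absorbing {V : Type*} [Fintype V] [DecidableEq V] (N : InfoNetwork V)
    (Ahat : Set V) : Matrix V V ℝ :=
  Matrix.of fun v u => if v ∈ Ahat then (if u = v then 1 else 0) else N.b v u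

section Auxiliary

open MeasureTheory
open scoped ENNReal

instance : IsProbabilityMeasure unifMeasure := by
  constructor
  rw [unifMeasure, Measure.restrict_apply_univ, Real.volume_Ioo]
  norm_num

instance instProbThreshold (V : Type*) [Fintype V] : IsProbabilityMeasure (thresholdMeasure V) :=
  inferInstanceAs (IsProbabilityMeasure (Measure.pi fun _ : V => unifMeasure))

theorem unif_Iic {c : ℝ} (h0 : 0 ≤ c) (h1 : c ≤ 1) :
    unifMeasure (Set.Iic c) = ENNReal.ofReal c := by
  rw [unifMeasure, Measure.restrict_apply measurableSet_Iic]
  apply le_antisymm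
  · have hsub : Set.Iic c ∩ Set.Ioo 0 1 ⊆ Set.Ioc 0 c := fun x hx => ⟨hx.2.1, hx.1⟩
    calc volume (Set.Iic c ∩ Set.Ioo 0 1) ≤ volume (Set.Ioc 0 c) := measure_mono hsub
      _ = ENNReal.ofReal c := by rw [Real.volume_Ioc, sub_zero]
  · have hsub : Set.Ioo 0 c ⊆ Set.Iic c ∩ Set.Ioo 0 1 :=
      fun x hx => ⟨le_of_lt hx.2, hx.1, lt_of_lt_of_le hx.2 h1⟩
    calc ENNReal.ofReal c = volume (Set.Ioo 0 c) := by rw [Real.volume_Ioo, sub_zero]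
      _ ≤ volume (Set.Iic c ∩ Set.Ioo 0 1) := measure_mono hsub


theorem indicatorCongrMem {α M : Type*} [Zero M] {s s' : Set α} (f : α → M) (a : α)
    (h : a ∈ s ↔ a ∈ s') : s.indicator f a = s'.indicator f a := by
  by_cases ha : a ∈ s
  · rw [Set.indicator_of_mem ha, Set.indicator_of_mem (h.1 ha)]
  · rw [Set.indicator_of_notMem ha, Set.indicator_of_notMem (fun h' => ha (h.2 h'))]

namespace InfoNetwork

variable {V : Type*} [Fintype V] (N : InfoNetwork V) {A Ahat : Set V}

theorem activeSet_zero (θ : V → ℝ) : N.activeSet A Ahat θ 0 = A ∪ Ahat := rfl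

theorem activeSet_succ (θ : V → ℝ) (t : ℕ) :
    N.activeSet A Ahat θ (t + 1) = Ahat ∪
      {v | v ∉ Ahat ∧ θ v ≤ ∑ u, (N.activeSet A Ahat θ t).indicator (N.b v) u} := rfl

open scoped Classical in
theorem b_d_eq (u : V) : N.b N.d u = if u = N.d then 1 else 0 := by
  classical
  by_cases h : u = N.d
  · simp [h, N.void_loop]
  · simp only [h, if_neg h]
    have hsum := N.row_sum N.d
    rw [← Finset.add_sum_erase _ _ (Finset.mem_univ N.d), N.void_loop] at hsum
    have h0 : ∑ x ∈ Finset.univ.erase N.d, N.b N.d x = 0 := by linarith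
    have hall := (Finset.sum_eq_zero_iff_of_nonneg (fun x _ => N.b_nonneg N.d x)).1 h0
    exact hall u (Finset.mem_erase.2 ⟨h, Finset.mem_univ u⟩)

open scoped Classical in
theorem d_sum (θ : V → ℝ) (t : ℕ) :
    ∑ u, (N.activeSet A Ahat θ t).indicator (N.b N.d) u
      = if N.d ∈ N.activeSet A Ahat θ t then (1 : ℝ) else 0 := by
  rw [Finset.sum_eq_single N.d]
  · by_cases h : N.d ∈ N.activeSet A Ahat θ t
    · rw [Set.indicator_of_mem h, N.void_loop, if_pos h]
    · rw [Set.indicator_of_notMem h, if_neg h]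
  · intro u _ hu
    apply Set.indicator_apply_eq_zero.2
    intro _
    rw [N.b_d_eq u, if_neg hu]
  · intro h; exact absurd (Finset.mem_univ N.d) h

theorem d_mem_succ_iff (hd0 : N.d ∉ A ∪ Ahat) (θ : V → ℝ) :
    ∀ t : ℕ, (N.d ∈ N.activeSet A Ahat θ (t + 1) ↔ θ N.d ≤ 0) := by
  classical
  have hdh : N.d ∉ Ahat := fun h => hd0 (Set.mem_union_right _ h)
  intro t
  induction t with
  | zero =>
    rw [activeSet_succ]
    simp only [Set.mem_union, Set.mem_setOf_eq]
    rw [N.d_sum θ 0]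
    have h0 : N.d ∉ N.activeSet A Ahat θ 0 := hd0
    simp [hdh, h0]
  | succ t ih =>
    rw [activeSet_succ]
    simp only [Set.mem_union, Set.mem_setOf_eq]
    rw [N.d_sum θ (t + 1)]
    by_cases h : θ N.d ≤ 0
    · have h1 : θ N.d ≤ 1 := h.trans zero_le_one
      simp [hdh, h, ih, h1]
    · simp [hdh, h, ih]

theorem active_congr (hacyc : N.Acyclic) (hA : A ⊆ {x | x ≠ N.d})
    (hAhat : Ahat ⊆ {x | x ≠ N.d}) :
    ∀ (t : ℕ) (u : V), u ≠ N.d → ∀ θ θ' : V → ℝ,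
      (∀ x, (x = u ∨ Relation.TransGen N.edgeRel u x ∨ x = N.d) → θ x = θ' x) →
      (u ∈ N.activeSet A Ahat θ t ↔ u ∈ N.activeSet A Ahat θ' t) := by
  have hd0 : N.d ∉ A ∪ Ahat := by
    rintro (h | h)
    · exact hA h rfl
    · exact hAhat h rfl
  intro t
  induction t with
  | zero => intro u _ θ θ' _; exact Iff.rfl
  | succ t ih =>
    intro u hu θ θ' hagree
    rw [activeSet_succ, activeSet_succ]
    by_cases huh : u ∈ Ahat
    · simp [huh]
    · simp only [Set.mem_union, Set.mem_setOf_eq, huh, not_false_eq_true, true_and, false_or]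
      have hsum : ∑ x, (N.activeSet A Ahat θ t).indicator (N.b u) x
          = ∑ x, (N.activeSet A Ahat θ' t).indicator (N.b u) x := by
        apply Finset.sum_congr rfl
        intro x _
        rcases eq_or_ne x N.d with rfl | hxd
        · have hiff : N.d ∈ N.activeSet A Ahat θ t ↔ N.d ∈ N.activeSet A Ahat θ' t := by
            have hdd : θ N.d = θ' N.d := hagree N.d (Or.inr (Or.inr rfl))
            cases t with
            | zero => exact Iff.rfl
            | succ s => rw [N.d_mem_succ_iff hd0 θ s, N.d_mem_succ_iff hd0 θ' s, hdd]
          exact indicatorCongrMem _ _ hiff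
        · rcases (N.b_nonneg u x).lt_or_eq with hpos | hzero
          · have hedge : N.edgeRel u x := ⟨hu, hxd, hpos⟩
            have hx : x ∈ N.activeSet A Ahat θ t ↔ x ∈ N.activeSet A Ahat θ' t := by
              apply ih x hxd θ θ'
              intro y hy
              apply hagree
              rcases hy with rfl | hy | rfl
              · exact Or.inr (Or.inl (Relation.TransGen.single hedge))
              · exact Or.inr (Or.inl (Relation.TransGen.head hedge hy))
              · exact Or.inr (Or.inr rfl)
            exact indicatorCongrMem _ _ hx
          · have hz : ∀ s : Set V, s.indicator (N.b u) x = 0 := fun s =>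
              Set.indicator_apply_eq_zero.2 fun _ => hzero.symm
            rw [hz, hz]
      rw [hsum, hagree u (Or.inl rfl)]

theorem measurableSet_active (A Ahat : Set V) :
    ∀ (t : ℕ) (u : V), MeasurableSet {θ : V → ℝ | u ∈ N.activeSet A Ahat θ t} := by
  intro t
  induction t with
  | zero =>
    intro u
    by_cases h : u ∈ A ∪ Ahat
    · have e : {θ : V → ℝ | u ∈ N.activeSet A Ahat θ 0} = Set.univ := by
        ext θ; simp [activeSet_zero, h]
      rw [e]; exact MeasurableSet.univ
    · have e : {θ : V → ℝ | u ∈ N.activeSet A Ahat θ 0} = ∅ := by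
        ext θ; simp [activeSet_zero, h]
      rw [e]; exact MeasurableSet.empty
  | succ t ih =>
    intro u
    have hterm : ∀ x : V,
        Measurable (fun θ : V → ℝ => (N.activeSet A Ahat θ t).indicator (N.b u) x) := by
      intro x
      have e : (fun θ : V → ℝ => (N.activeSet A Ahat θ t).indicator (N.b u) x)
          = Set.indicator {θ : V → ℝ | x ∈ N.activeSet A Ahat θ t} (fun _ => N.b u x) := by
        funext θ
        by_cases hx : x ∈ N.activeSet A Ahat θ t
        · rw [Set.indicator_of_mem hx, Set.indicator_of_mem
            (s := {θ' : V → ℝ | x ∈ N.activeSet A Ahat θ' t}) (a := θ) hx]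
        · rw [Set.indicator_of_notMem hx, Set.indicator_of_notMem
            (s := {θ' : V → ℝ | x ∈ N.activeSet A Ahat θ' t}) (a := θ) hx]
      rw [e]
      exact Measurable.indicator measurable_const (ih x)
    have hF : Measurable (fun θ : V → ℝ =>
        ∑ x, (N.activeSet A Ahat θ t).indicator (N.b u) x) :=
      Finset.measurable_sum _ fun x _ => hterm x
    by_cases hu : u ∈ Ahat
    · have e : {θ : V → ℝ | u ∈ N.activeSet A Ahat θ (t + 1)} = Set.univ := by
        ext θ; simp [activeSet_succ, hu]
      rw [e]; exact MeasurableSet.univ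
    · have e : {θ : V → ℝ | u ∈ N.activeSet A Ahat θ (t + 1)}
          = {θ : V → ℝ | θ u ≤ ∑ x, (N.activeSet A Ahat θ t).indicator (N.b u) x} := by
        ext θ; simp [activeSet_succ, hu]
      rw [e]
      exact measurableSet_le (measurable_pi_apply u) hF

theorem measurable_g (A Ahat : Set V) (v : V) (t : ℕ) :
    Measurable (fun θ : V → ℝ => ∑ x, (N.activeSet A Ahat θ t).indicator (N.b v) x) := by
  apply Finset.measurable_sum
  intro x _
  have e : (fun θ : V → ℝ => (N.activeSet A Ahat θ t).indicator (N.b v) x)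
      = Set.indicator {θ : V → ℝ | x ∈ N.activeSet A Ahat θ t} (fun _ => N.b v x) := by
    funext θ
    by_cases hx : x ∈ N.activeSet A Ahat θ t
    · rw [Set.indicator_of_mem hx, Set.indicator_of_mem
        (s := {θ' : V → ℝ | x ∈ N.activeSet A Ahat θ' t}) (a := θ) hx]
    · rw [Set.indicator_of_notMem hx, Set.indicator_of_notMem
        (s := {θ' : V → ℝ | x ∈ N.activeSet A Ahat θ' t}) (a := θ) hx]
  rw [e]
  exact Measurable.indicator measurable_const (N.measurableSet_active A Ahat t x)

theorem EX_mem_hat {v : V} (hv : v ∈ Ahat) (t : ℕ) : N.EX A Ahat t v = 1 := by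
  have e : {θ : V → ℝ | v ∈ N.activeSet A Ahat θ t} = Set.univ := by
    apply Set.eq_univ_of_forall
    intro θ
    cases t with
    | zero => exact Set.mem_union_right _ hv
    | succ t => exact Set.mem_union_left _ hv
  rw [EX, e, measure_univ, ENNReal.toReal_one]

theorem EX_d (hA : A ⊆ {x | x ≠ N.d}) (hAhat : Ahat ⊆ {x | x ≠ N.d}) (t : ℕ) :
    N.EX A Ahat t N.d = 0 := by
  classical
  have hd0 : N.d ∉ A ∪ Ahat := by
    rintro (h | h)
    · exact hA h rfl
    · exact hAhat h rfl
  have hnull : thresholdMeasure V {θ : V → ℝ | θ N.d ≤ 0} = 0 := by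
    have hsub : {θ : V → ℝ | θ N.d ≤ 0}
        ⊆ Set.univ.pi (fun x => if x = N.d then Set.Iic (0 : ℝ) else Set.univ) := by
      intro θ hθ x _
      by_cases hx : x = N.d
      · simp only [if_pos hx]
        rw [hx]
        exact hθ
      · simp [hx]
    refine measure_mono_null hsub ?_
    rw [thresholdMeasure, Measure.pi_pi]
    apply Finset.prod_eq_zero (Finset.mem_univ N.d)
    rw [if_pos rfl]
    rw [unifMeasure, Measure.restrict_apply measurableSet_Iic]
    have e : Set.Iic (0 : ℝ) ∩ Set.Ioo 0 1 = ∅ := by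
      ext x
      simp only [Set.mem_inter_iff, Set.mem_Iic, Set.mem_Ioo, Set.mem_empty_iff_false, iff_false,
        not_and]
      intro h h'
      linarith
    rw [e, measure_empty]
  cases t with
  | zero =>
    have e : {θ : V → ℝ | N.d ∈ N.activeSet A Ahat θ 0} = ∅ := by
      ext θ
      simp only [activeSet_zero, Set.mem_setOf_eq, Set.mem_empty_iff_false, iff_false]
      exact hd0
    rw [EX, e, measure_empty, ENNReal.toReal_zero]
  | succ t =>
    have hsub : {θ : V → ℝ | N.d ∈ N.activeSet A Ahat θ (t + 1)} ⊆ {θ : V → ℝ | θ N.d ≤ 0} :=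
      fun θ h => (N.d_mem_succ_iff hd0 θ t).1 h
    rw [EX, measure_mono_null hsub hnull, ENNReal.toReal_zero]

theorem g_update [DecidableEq V] (hacyc : N.Acyclic) (hA : A ⊆ {x | x ≠ N.d}) (hAhat : Ahat ⊆ {x | x ≠ N.d})
    {v : V} (hv : v ≠ N.d) (t : ℕ) (θ : V → ℝ) (s : ℝ) :
    ∑ x, (N.activeSet A Ahat (Function.update θ v s) t).indicator (N.b v) x
      = ∑ x, (N.activeSet A Ahat θ t).indicator (N.b v) x := by
  classical
  have hd0 : N.d ∉ A ∪ Ahat := by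
    rintro (h | h)
    · exact hA h rfl
    · exact hAhat h rfl
  apply Finset.sum_congr rfl
  intro x _
  rcases eq_or_ne x N.d with rfl | hxd
  · refine indicatorCongrMem _ _ ?_
    cases t with
    | zero => exact Iff.rfl
    | succ m =>
      rw [N.d_mem_succ_iff hd0 _ m, N.d_mem_succ_iff hd0 θ m,
        Function.update_of_ne (Ne.symm hv)]
  · rcases (N.b_nonneg v x).lt_or_eq with hpos | hzero
    · have hedge : N.edgeRel v x := ⟨hv, hxd, hpos⟩
      have hxv : x ≠ v := by
        rintro rfl
        exact hacyc x (Relation.TransGen.single hedge)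
      refine indicatorCongrMem _ _ (N.active_congr hacyc hA hAhat t x hxd _ θ ?_)
      intro y hy
      have hyv : y ≠ v := by
        rintro rfl
        rcases hy with hy | hy | hy
        · exact hxv hy.symm
        · exact hacyc y (Relation.TransGen.head hedge hy)
        · exact hv hy
      exact Function.update_of_ne hyv s θ
    · have hz : ∀ s' : Set V, s'.indicator (N.b v) x = 0 := fun s' =>
        Set.indicator_apply_eq_zero.2 fun _ => hzero.symm
      rw [hz, hz]

theorem EX_succ (hacyc : N.Acyclic) (hA : A ⊆ {x | x ≠ N.d}) (hAhat : Ahat ⊆ {x | x ≠ N.d})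
    {v : V} (hv : v ≠ N.d) (hvh : v ∉ Ahat) (t : ℕ) :
    N.EX A Ahat (t + 1) v = ∑ u, N.b v u * N.EX A Ahat t u := by
  classical
  have hgm : Measurable (fun θ : V → ℝ =>
      ∑ x, (N.activeSet A Ahat θ t).indicator (N.b v) x) := N.measurable_g A Ahat v t
  have hg0 : ∀ θ : V → ℝ, 0 ≤ ∑ x, (N.activeSet A Ahat θ t).indicator (N.b v) x := fun θ =>
    Finset.sum_nonneg fun x _ => Set.indicator_nonneg (fun a _ => N.b_nonneg v a) x
  have hg1 : ∀ θ : V → ℝ, ∑ x, (N.activeSet A Ahat θ t).indicator (N.b v) x ≤ 1 := by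
    intro θ
    calc ∑ x, (N.activeSet A Ahat θ t).indicator (N.b v) x ≤ ∑ x, N.b v x :=
          Finset.sum_le_sum fun x _ =>
            Set.indicator_le_self' (fun a _ => N.b_nonneg v a) x
      _ = 1 := N.row_sum v
  have hE : {θ : V → ℝ | v ∈ N.activeSet A Ahat θ (t + 1)}
      = {θ : V → ℝ | θ v ≤ ∑ x, (N.activeSet A Ahat θ t).indicator (N.b v) x} := by
    ext θ
    rw [Set.mem_setOf_eq, Set.mem_setOf_eq, activeSet_succ]
    simp [hvh]
  have hEmeas : MeasurableSet
      {θ : V → ℝ | θ v ≤ ∑ x, (N.activeSet A Ahat θ t).indicator (N.b v) x} :=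
    measurableSet_le (measurable_pi_apply v) hgm
  have hindm : ∀ u : V, Measurable
      ({θ' : V → ℝ | u ∈ N.activeSet A Ahat θ' t}.indicator (1 : (V → ℝ) → ℝ≥0∞)) := fun u =>
    Measurable.indicator measurable_const (N.measurableSet_active A Ahat t u)
  have key : thresholdMeasure V
        {θ : V → ℝ | θ v ≤ ∑ x, (N.activeSet A Ahat θ t).indicator (N.b v) x}
      = ∑ u, ENNReal.ofReal (N.b v u)
          * thresholdMeasure V {θ : V → ℝ | u ∈ N.activeSet A Ahat θ t} := by
    have hfm : Measurable
        ({θ : V → ℝ | θ v ≤ ∑ x, (N.activeSet A Ahat θ t).indicator (N.b v) x}.indicator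
          (1 : (V → ℝ) → ℝ≥0∞)) :=
      Measurable.indicator measurable_const hEmeas
    have hGm : Measurable (fun θ : V → ℝ =>
        ENNReal.ofReal (∑ x, (N.activeSet A Ahat θ t).indicator (N.b v) x)) :=
      ENNReal.measurable_ofReal.comp hgm
    rw [← lintegral_indicator_one hEmeas]
    have step2 : ∫⁻ θ, ({θ' : V → ℝ |
          θ' v ≤ ∑ x, (N.activeSet A Ahat θ' t).indicator (N.b v) x}.indicator
            (1 : (V → ℝ) → ℝ≥0∞)) θ ∂thresholdMeasure V
        = ∫⁻ θ, ENNReal.ofReal (∑ x, (N.activeSet A Ahat θ t).indicator (N.b v) x)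
            ∂thresholdMeasure V := by
      rw [thresholdMeasure]
      apply lintegral_eq_of_lmarginal_eq {v} hfm hGm
      funext θ
      rw [lmarginal_singleton, lmarginal_singleton]
      have hupd : ∀ s : ℝ,
          ∑ x, (N.activeSet A Ahat (Function.update θ v s) t).indicator (N.b v) x
            = ∑ x, (N.activeSet A Ahat θ t).indicator (N.b v) x := fun s =>
        N.g_update hacyc hA hAhat hv t θ s
      have h1 : ∀ s : ℝ, ({θ' : V → ℝ |
            θ' v ≤ ∑ x, (N.activeSet A Ahat θ' t).indicator (N.b v) x}.indicator
              (1 : (V → ℝ) → ℝ≥0∞)) (Function.update θ v s)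
          = (Set.Iic (∑ x, (N.activeSet A Ahat θ t).indicator (N.b v) x)).indicator
              (1 : ℝ → ℝ≥0∞) s := by
        intro s
        have hmem : (Function.update θ v s ∈ {θ' : V → ℝ |
              θ' v ≤ ∑ x, (N.activeSet A Ahat θ' t).indicator (N.b v) x})
            ↔ s ∈ Set.Iic (∑ x, (N.activeSet A Ahat θ t).indicator (N.b v) x) := by
          rw [Set.mem_setOf_eq, Function.update_self, hupd s, Set.mem_Iic]
        by_cases hs : s ∈ Set.Iic (∑ x, (N.activeSet A Ahat θ t).indicator (N.b v) x)
        · rw [Set.indicator_of_mem (hmem.2 hs), Set.indicator_of_mem hs]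
          rfl
        · rw [Set.indicator_of_notMem (fun h => hs (hmem.1 h)), Set.indicator_of_notMem hs]
      simp_rw [h1, hupd]
      rw [lintegral_indicator_one measurableSet_Iic, unif_Iic (hg0 θ) (hg1 θ), lintegral_const,
        measure_univ, mul_one]
    rw [step2]
    have hGeq : ∀ θ : V → ℝ,
        ENNReal.ofReal (∑ x, (N.activeSet A Ahat θ t).indicator (N.b v) x)
          = ∑ u, ENNReal.ofReal (N.b v u)
              * ({θ' : V → ℝ | u ∈ N.activeSet A Ahat θ' t}.indicator (1 : (V → ℝ) → ℝ≥0∞) θ) := by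
      intro θ
      rw [ENNReal.ofReal_sum_of_nonneg
        (fun u _ => Set.indicator_nonneg (fun a _ => N.b_nonneg v a) u)]
      apply Finset.sum_congr rfl
      intro u _
      by_cases hu : u ∈ N.activeSet A Ahat θ t
      · rw [Set.indicator_of_mem hu, Set.indicator_of_mem
          (s := {θ' : V → ℝ | u ∈ N.activeSet A Ahat θ' t}) (a := θ) hu, Pi.one_apply, mul_one]
      · rw [Set.indicator_of_notMem hu, Set.indicator_of_notMem
          (s := {θ' : V → ℝ | u ∈ N.activeSet A Ahat θ' t}) (a := θ) hu, mul_zero,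
          ENNReal.ofReal_zero]
    simp_rw [hGeq]
    rw [lintegral_finset_sum _ (fun u _ => (hindm u).const_mul _)]
    apply Finset.sum_congr rfl
    intro u _
    rw [lintegral_const_mul _ (hindm u),
      lintegral_indicator_one (N.measurableSet_active A Ahat t u)]
  rw [EX, hE, key, ENNReal.toReal_sum
    (fun u _ => ENNReal.mul_ne_top ENNReal.ofReal_ne_top (measure_ne_top _ _))]
  exact Finset.sum_congr rfl fun u _ => by
    rw [ENNReal.toReal_mul, ENNReal.toReal_ofReal (N.b_nonneg v u)]; rfl

open scoped Classical in
theorem EX_zero (v : V) : N.EX A Ahat 0 v = if v ∈ A ∪ Ahat then 1 else 0 := by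
  by_cases h : v ∈ A ∪ Ahat
  · have e : {θ : V → ℝ | v ∈ N.activeSet A Ahat θ 0} = Set.univ := by
      ext θ; simp [activeSet_zero, h]
    rw [EX, e, measure_univ, ENNReal.toReal_one, if_pos h]
  · have e : {θ : V → ℝ | v ∈ N.activeSet A Ahat θ 0} = ∅ := by
      ext θ; simp [activeSet_zero, h]
    rw [EX, e, measure_empty, ENNReal.toReal_zero, if_neg h]

open scoped Classical in
theorem EX_eq_matrix [DecidableEq V] (hacyc : N.Acyclic) (hA : A ⊆ {x | x ≠ N.d})
    (hAhat : Ahat ⊆ {x | x ≠ N.d}) :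
    ∀ (t : ℕ) (v : V), N.EX A Ahat t v
      = ∑ u, (absorbing N Ahat ^ t) v u * (if u ∈ A ∪ Ahat then (1 : ℝ) else 0) := by
  intro t
  induction t with
  | zero =>
    intro v
    rw [N.EX_zero v, pow_zero, Finset.sum_eq_single v]
    · rw [Matrix.one_apply_eq, one_mul]
    · intro u _ hu
      rw [Matrix.one_apply_ne (Ne.symm hu), zero_mul]
    · intro h; exact absurd (Finset.mem_univ v) h
  | succ t ih =>
    intro v
    have hpow : ∀ u, (absorbing N Ahat ^ (t + 1)) v u
        = ∑ x, absorbing N Ahat v x * (absorbing N Ahat ^ t) x u := by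
      intro u
      rw [pow_succ', Matrix.mul_apply]
    by_cases hvh : v ∈ Ahat
    · have hrow : ∀ x, absorbing N Ahat v x = if x = v then 1 else 0 := by
        intro x; simp [absorbing, hvh]
      have hsame : ∀ u, (absorbing N Ahat ^ (t + 1)) v u = (absorbing N Ahat ^ t) v u := by
        intro u
        rw [hpow u, Finset.sum_eq_single v]
        · rw [hrow v, if_pos rfl, one_mul]
        · intro x _ hx
          rw [hrow x, if_neg hx, zero_mul]
        · intro h; exact absurd (Finset.mem_univ v) h
      simp_rw [hsame]
      rw [← ih v, N.EX_mem_hat hvh (t + 1), N.EX_mem_hat hvh t]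
    · by_cases hvd : v = N.d
      · subst hvd
        have hrow : ∀ x, absorbing N Ahat N.d x = N.b N.d x := by
          intro x; simp [absorbing, hvh]
        have hsame : ∀ u, (absorbing N Ahat ^ (t + 1)) N.d u = (absorbing N Ahat ^ t) N.d u := by
          intro u
          rw [hpow u, Finset.sum_eq_single N.d]
          · rw [hrow N.d, N.void_loop, one_mul]
          · intro x _ hx
            have hz : N.b N.d x = 0 := by rw [N.b_d_eq x]; exact if_neg hx
            rw [hrow x, hz, zero_mul]
          · intro h; exact absurd (Finset.mem_univ N.d) h
        simp_rw [hsame]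
        rw [← ih N.d, N.EX_d hA hAhat (t + 1), N.EX_d hA hAhat t]
      · rw [N.EX_succ hacyc hA hAhat hvd hvh t]
        simp_rw [ih, Finset.mul_sum]
        rw [Finset.sum_comm]
        apply Finset.sum_congr rfl
        intro u _
        rw [hpow u, Finset.sum_mul]
        apply Finset.sum_congr rfl
        intro x _
        have habs : absorbing N Ahat v x = N.b v x := by simp [absorbing, hvh]
        rw [habs]
        ring

end InfoNetwork

end Auxiliary

/-- in an acyclic network, for disjoint `C, Ĉ ⊆ V \ {d}` and a node
`w ∈ (V \ {d}) \ (C ∪ Ĉ)`, the marginal gain of adding `w` to the transient initial set is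
`E[X^t_v(C ∪ {w}, Ĉ)] − E[X^t_v(C, Ĉ)] = (M_Ĉ^t) v w`; in particular it does not depend
on `C`. -/
theorem EX_marginal_gain {V : Type*} [Fintype V] [DecidableEq V] (N : InfoNetwork V)
    (hacyc : N.Acyclic) (C Chat : Set V)
    (hC : C ⊆ {x : V | x ≠ N.d}) (hChat : Chat ⊆ {x : V | x ≠ N.d})
    (hdisj : Disjoint C Chat)
    (w : V) (hw : w ≠ N.d) (hwC : w ∉ C ∪ Chat)
    (T : ℕ) (t : ℕ) (ht1 : 1 ≤ t) (htT : t ≤ T) (v : V) (hv : v ≠ N.d) :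
    N.EX (insert w C) Chat t v - N.EX C Chat t v = (absorbing N Chat ^ t) v w := by
  classical
  have hA1 : insert w C ⊆ {x : V | x ≠ N.d} := by
    intro x hx
    rcases hx with rfl | hx
    · exact hw
    · exact hC hx
  rw [N.EX_eq_matrix hacyc hA1 hChat t v, N.EX_eq_matrix hacyc hC hChat t v,
    ← Finset.sum_sub_distrib, Finset.sum_eq_single w]
  · have h1 : w ∈ insert w C ∪ Chat := Or.inl (Set.mem_insert w C)
    rw [if_pos h1, if_neg hwC, mul_one, mul_zero, sub_zero]
  · intro u _ hu
    have hiff : (u ∈ insert w C ∪ Chat) ↔ (u ∈ C ∪ Chat) := by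
      constructor
      · rintro (hu' | hu')
        · rcases hu' with rfl | hu''
          · exact absurd rfl hu
          · exact Or.inl hu''
        · exact Or.inr hu'
      · rintro (hu' | hu')
        · exact Or.inl (Set.mem_insert_of_mem _ hu')
        · exact Or.inr hu'
    by_cases h : u ∈ C ∪ Chat
    · rw [if_pos (hiff.2 h), if_pos h, sub_self]
    · rw [if_neg (fun h' => h (hiff.1 h')), if_neg h, sub_self]
  · intro h; exact absurd (Finset.mem_univ w) h
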